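/- arXiv:1710.05215 — 3 statements merged into one kernel-verified Lean document; each statement's English description precedes it below -/
import Mathlib

section
/- Let A = (A^(1),...,A^(m)) and B = (B^(1),...,B^(m)) be two m-tuples of n×n complex matrices such that each family consists of pairwise commuting normal matrices and each A^(k) is invertible. Let {u_1,...,u_n} and {v_1,...,v_n} be orthonormal bases of ℂ^n consisting of joint eigenvectors, i.e. A^(k) u_j = α_j^(k) u_j and B^(k) v_j = β_j^(k) v_j for all j = 1,...,n and k = 1,...,m, where α_j = (α_j^(1),...,α_j^(m)) and β_j = (β_j^(1),...,β_j^(m)) are the joint eigenvalues of A and B. Set E^(k) = B^(k) − A^(k). Then there exists a permutation π of {1,...,n} such that ∑_{j=1}^n ∑_{k=1}^m |(α_j^(k) − β_{π(j)}^(k)) / α_j^(k)|² ≤ ∑_{k=1}^m ‖(A^(k))^{-1} E^(k)‖_F². -/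
open Matrix BigOperators

/-- The Frobenius norm of a complex `n × n` matrix. -/
noncomputable def frobNorm {n : ℕ} (M : Matrix (Fin n) (Fin n) ℂ) : ℝ :=
  Real.sqrt (∑ i, ∑ j, ‖M i j‖ ^ 2)

lemma sumSq_eq_trace {n : ℕ} (M : Matrix (Fin n) (Fin n) ℂ) :
    ((∑ i, ∑ j, ‖M i j‖ ^ 2 : ℝ) : ℂ) = (Mᴴ * M).trace := by
  rw [Matrix.trace]
  push_cast
  rw [Finset.sum_comm]
  refine Finset.sum_congr rfl fun j _ => ?_
  simp only [Matrix.diag_apply, Matrix.mul_apply, Matrix.conjTranspose_apply]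
  refine Finset.sum_congr rfl fun i _ => ?_
  rw [Complex.star_def, Complex.conj_mul']

lemma frob_unitary {n : ℕ} (M X Y : Matrix (Fin n) (Fin n) ℂ)
    (hX : Xᴴ * X = 1) (hY : Y * Yᴴ = 1) :
    ∑ i, ∑ j, ‖(X * M * Y) i j‖ ^ 2 = ∑ i, ∑ j, ‖M i j‖ ^ 2 := by
  have h1 := sumSq_eq_trace (X * M * Y)
  have h2 := sumSq_eq_trace M
  have h3 : ((X * M * Y)ᴴ * (X * M * Y)).trace = (Mᴴ * M).trace := by
    have : (X * M * Y)ᴴ * (X * M * Y) = Yᴴ * (Mᴴ * M) * Y := by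
      simp only [Matrix.conjTranspose_mul]
      calc Yᴴ * (Mᴴ * Xᴴ) * (X * M * Y)
          = Yᴴ * (Mᴴ * (Xᴴ * X) * M) * Y := by simp only [Matrix.mul_assoc]
        _ = Yᴴ * (Mᴴ * M) * Y := by rw [hX]; simp [Matrix.mul_assoc]
    rw [this, Matrix.trace_mul_comm (Yᴴ * (Mᴴ * M)) Y, ← Matrix.mul_assoc, Matrix.trace_mul_comm,
      Matrix.mul_assoc, hY, Matrix.mul_one]
  exact_mod_cast h1.trans (h3.trans h2.symm)

lemma exists_perm_sum_le {n : ℕ} (c : Fin n → Fin n → ℝ) (W : Matrix (Fin n) (Fin n) ℝ)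
    (hW : W ∈ doublyStochastic ℝ (Fin n)) :
    ∃ π : Equiv.Perm (Fin n), ∑ i, c i (π i) ≤ ∑ i, ∑ j, c i j * W i j := by
  classical
  obtain ⟨w, hw0, hw1, hwM⟩ := exists_eq_sum_perm_of_mem_doublyStochastic hW
  have hperm : ∀ σ : Equiv.Perm (Fin n), ∀ i,
      ∑ j, c i j * (w σ * (σ.permMatrix ℝ) i j) = w σ * c i (σ i) := by
    intro σ i
    simp [Equiv.Perm.permMatrix, PEquiv.toMatrix_apply, Equiv.toPEquiv_apply, mul_ite,
      Finset.sum_ite_eq', mul_comm, mul_left_comm]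
  have hT : ∑ i, ∑ j, c i j * W i j = ∑ σ : Equiv.Perm (Fin n), w σ * ∑ i, c i (σ i) := by
    have hWij : ∀ i j, W i j = ∑ σ : Equiv.Perm (Fin n), w σ * (σ.permMatrix ℝ) i j := by
      intro i j
      rw [← hwM]
      simp only [Matrix.sum_apply, Matrix.smul_apply, smul_eq_mul]
    calc ∑ i, ∑ j, c i j * W i j
        = ∑ i, ∑ σ : Equiv.Perm (Fin n), ∑ j, c i j * (w σ * (σ.permMatrix ℝ) i j) := by
          refine Finset.sum_congr rfl fun i _ => ?_
          rw [Finset.sum_comm]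
          refine Finset.sum_congr rfl fun j _ => ?_
          rw [hWij, Finset.mul_sum]
      _ = ∑ σ : Equiv.Perm (Fin n), ∑ i, w σ * c i (σ i) := by
          rw [Finset.sum_comm]
          exact Finset.sum_congr rfl fun σ _ => Finset.sum_congr rfl fun i _ => hperm σ i
      _ = ∑ σ : Equiv.Perm (Fin n), w σ * ∑ i, c i (σ i) := by
          simp [Finset.mul_sum]
  by_contra h
  push_neg at h
  obtain ⟨σ₀, hσ₀⟩ : ∃ σ : Equiv.Perm (Fin n), 0 < w σ := by
    by_contra h'
    push_neg at h'
    have : ∑ σ : Equiv.Perm (Fin n), w σ = 0 :=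
      Finset.sum_eq_zero fun σ _ => le_antisymm (h' σ) (hw0 σ)
    rw [hw1] at this; norm_num at this
  have hlt : ∑ σ : Equiv.Perm (Fin n), w σ * (∑ i, ∑ j, c i j * W i j) <
      ∑ σ : Equiv.Perm (Fin n), w σ * ∑ i, c i (σ i) := by
    refine Finset.sum_lt_sum (fun σ _ => mul_le_mul_of_nonneg_left (h σ).le (hw0 σ))
      ⟨σ₀, Finset.mem_univ _, mul_lt_mul_of_pos_left (h σ₀) hσ₀⟩
  rw [← Finset.sum_mul, hw1, one_mul, ← hT] at hlt
  exact lt_irrefl _ hlt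

lemma star_dot_self_eq_zero {n : ℕ} {x : Fin n → ℂ} (h : star x ⬝ᵥ x = 0) : x = 0 := by
  have h1 : ((∑ p, ‖x p‖ ^ 2 : ℝ) : ℂ) = 0 := by
    rw [← h]
    simp only [dotProduct, Pi.star_apply]
    push_cast
    exact Finset.sum_congr rfl fun p _ => by rw [Complex.star_def, Complex.conj_mul']
  have h2 : (∑ p, ‖x p‖ ^ 2 : ℝ) = 0 := by exact_mod_cast h1
  funext p
  have hp : ‖x p‖ ^ 2 = 0 := by
    have := (Finset.sum_eq_zero_iff_of_nonneg (fun q _ => by positivity)).mp h2 p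
      (Finset.mem_univ p)
    exact this
  simpa using pow_eq_zero_iff (n := 2) (by norm_num) |>.mp hp

/-- **Hoffman–Wielandt type relative perturbation bound for joint spectra of
commuting tuples of normal matrices.**
If `A` and `B` are `m`-tuples of pairwise commuting normal `n × n` complex matrices,
each `A k` is invertible, and `u`, `v` are orthonormal bases of joint eigenvectors
with joint eigenvalues `α`, `β`, then for some permutation `π`,
`∑_j ∑_k |(α_j^(k) - β_{π j}^(k)) / α_j^(k)|² ≤ ∑_k ‖(A^(k))⁻¹ (B^(k) - A^(k))‖_F²`. -/
theorem relative_hoffman_wielandt_normal_tuples {m n : ℕ}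
    (A B : Fin m → Matrix (Fin n) (Fin n) ℂ)
    (hAcomm : ∀ k l, Commute (A k) (A l))
    (hBcomm : ∀ k l, Commute (B k) (B l))
    (hAnormal : ∀ k, A k * (A k)ᴴ = (A k)ᴴ * A k)
    (hBnormal : ∀ k, B k * (B k)ᴴ = (B k)ᴴ * B k)
    (hAinv : ∀ k, IsUnit (A k))
    (u v : Fin n → (Fin n → ℂ))
    (hu : ∀ i j, star (u i) ⬝ᵥ u j = if i = j then 1 else 0)
    (hv : ∀ i j, star (v i) ⬝ᵥ v j = if i = j then 1 else 0)
    (α β : Fin m → Fin n → ℂ)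
    (hα : ∀ k j, (A k).mulVec (u j) = α k j • u j)
    (hβ : ∀ k j, (B k).mulVec (v j) = β k j • v j) :
    ∃ π : Equiv.Perm (Fin n),
      ∑ j, ∑ k, ‖(α k j - β k (π j)) / α k j‖ ^ 2 ≤
        ∑ k, (frobNorm ((A k)⁻¹ * (B k - A k))) ^ 2 := by
  classical
  -- basis matrices
  set X : Matrix (Fin n) (Fin n) ℂ := Matrix.of (fun i p => star (u i p)) with hXdef
  set Y : Matrix (Fin n) (Fin n) ℂ := Matrix.of (fun p j => v j p) with hYdef
  have hXX : X * Xᴴ = 1 := by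
    ext i j
    simpa [Matrix.mul_apply, Matrix.one_apply, dotProduct, X] using hu i j
  have hYY : Yᴴ * Y = 1 := by
    ext i j
    simpa [Matrix.mul_apply, Matrix.one_apply, dotProduct, Y] using hv i j
  have hXX' : Xᴴ * X = 1 := mul_eq_one_comm.mp hXX
  have hYY' : Y * Yᴴ = 1 := mul_eq_one_comm.mp hYY
  -- the unitary overlap matrix
  set Mm : Matrix (Fin n) (Fin n) ℂ := X * Y with hMdef
  have hMr : Mm * Mmᴴ = 1 := by
    rw [hMdef, Matrix.conjTranspose_mul, Matrix.mul_assoc, ← Matrix.mul_assoc Y, hYY',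
      Matrix.one_mul, hXX]
  have hMl : Mmᴴ * Mm = 1 := mul_eq_one_comm.mp hMr
  -- entries of Mm
  have hMent : ∀ i j, Mm i j = star (u i) ⬝ᵥ v j := by
    intro i j
    simp [hMdef, Matrix.mul_apply, dotProduct, X, Y]
  -- the doubly stochastic matrix W
  set W : Matrix (Fin n) (Fin n) ℝ := Matrix.of (fun i j => ‖Mm i j‖ ^ 2) with hWdef
  have hWds : W ∈ doublyStochastic ℝ (Fin n) := by
    rw [mem_doublyStochastic_iff_sum]
    refine ⟨fun i j => by simp only [hWdef, Matrix.of_apply]; positivity, fun i => ?_, fun j => ?_⟩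
    · have h1 : (Mm * Mmᴴ) i i = 1 := by rw [hMr]; simp
      have : ((∑ j, ‖Mm i j‖ ^ 2 : ℝ) : ℂ) = 1 := by
        rw [← h1]
        simp only [Matrix.mul_apply, Matrix.conjTranspose_apply]
        push_cast
        refine Finset.sum_congr rfl fun j _ => ?_
        rw [mul_comm, Complex.star_def, Complex.conj_mul']
      simp only [hWdef, Matrix.of_apply]
      exact_mod_cast this
    · have h1 : (Mmᴴ * Mm) j j = 1 := by rw [hMl]; simp
      have : ((∑ i, ‖Mm i j‖ ^ 2 : ℝ) : ℂ) = 1 := by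
        rw [← h1]
        simp only [Matrix.mul_apply, Matrix.conjTranspose_apply]
        push_cast
        refine Finset.sum_congr rfl fun i _ => ?_
        rw [Complex.star_def, Complex.conj_mul']
      simp only [hWdef, Matrix.of_apply]
      exact_mod_cast this
  -- nonvanishing of eigenvalues
  have hAdet : ∀ k, IsUnit (A k).det := fun k => (Matrix.isUnit_iff_isUnit_det (A k)).mp (hAinv k)
  have hu0 : ∀ i, u i ≠ 0 := by
    intro i h
    have := hu i i
    rw [h] at this
    simp at this
  have hα0 : ∀ k i, α k i ≠ 0 := by
    intro k i h
    apply hu0 i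
    have h1 : (A k)⁻¹ *ᵥ ((A k) *ᵥ u i) = u i := by
      rw [Matrix.mulVec_mulVec, Matrix.nonsing_inv_mul _ (hAdet k), Matrix.one_mulVec]
    rw [hα k i, h, zero_smul, Matrix.mulVec_zero] at h1
    exact h1.symm
  -- normality: (A k)ᴴ u i = conj (α k i) • u i
  have hq : ∀ k i, star (u i) ⬝ᵥ ((A k)ᴴ *ᵥ u i) = star (α k i) := by
    intro k i
    rw [Matrix.dotProduct_mulVec, ← Matrix.star_mulVec, hα k i]
    simp [hu i i]
  have hαH : ∀ k i, (A k)ᴴ *ᵥ u i = star (α k i) • u i := by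
    intro k i
    have hz : star ((A k)ᴴ *ᵥ u i - star (α k i) • u i) ⬝ᵥ
        ((A k)ᴴ *ᵥ u i - star (α k i) • u i) = 0 := by
      have e1 : star ((A k)ᴴ *ᵥ u i) ⬝ᵥ ((A k)ᴴ *ᵥ u i) = α k i * star (α k i) := by
        rw [Matrix.star_mulVec, Matrix.conjTranspose_conjTranspose,
          ← Matrix.dotProduct_mulVec, Matrix.mulVec_mulVec, hAnormal k,
          ← Matrix.mulVec_mulVec, hα k i, Matrix.mulVec_smul, dotProduct_smul]
        rw [hq k i]
        simp [smul_eq_mul]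
      have e2 : star ((A k)ᴴ *ᵥ u i) ⬝ᵥ (star (α k i) • u i) = star (α k i) * α k i := by
        rw [dotProduct_smul, Matrix.star_mulVec, Matrix.conjTranspose_conjTranspose,
          ← Matrix.dotProduct_mulVec, hα k i]
        simp [hu i i, smul_eq_mul, mul_comm]
      have e3 : star (star (α k i) • u i) ⬝ᵥ ((A k)ᴴ *ᵥ u i) = α k i * star (α k i) := by
        rw [star_smul, smul_dotProduct, hq k i]
        simp [smul_eq_mul]
      have e4 : star (star (α k i) • u i) ⬝ᵥ (star (α k i) • u i) = α k i * star (α k i) := by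
        rw [star_smul, smul_dotProduct, dotProduct_smul]
        simp [hu i i, smul_eq_mul]
      rw [star_sub, sub_dotProduct, dotProduct_sub, dotProduct_sub, e1, e2, e3, e4]
      ring
    exact sub_eq_zero.mp (star_dot_self_eq_zero hz)
  -- action of (A k)⁻¹ in dot products
  have hdetH : ∀ k, IsUnit ((A k)ᴴ).det := by
    intro k
    rw [Matrix.det_conjTranspose]
    exact (hAdet k).star
  have hkey : ∀ k i (w : Fin n → ℂ),
      star (u i) ⬝ᵥ ((A k)⁻¹ *ᵥ w) = (α k i)⁻¹ * (star (u i) ⬝ᵥ w) := by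
    intro k i w
    have hAHinv : ((A k)ᴴ)⁻¹ *ᵥ u i = (star (α k i))⁻¹ • u i := by
      have h1 : ((A k)ᴴ)⁻¹ *ᵥ ((A k)ᴴ *ᵥ u i) = u i := by
        rw [Matrix.mulVec_mulVec, Matrix.nonsing_inv_mul _ (hdetH k), Matrix.one_mulVec]
      rw [hαH k i, Matrix.mulVec_smul] at h1
      have hs : star (α k i) ≠ 0 := star_ne_zero.mpr (hα0 k i)
      calc ((A k)ᴴ)⁻¹ *ᵥ u i = (star (α k i))⁻¹ • (star (α k i) • (((A k)ᴴ)⁻¹ *ᵥ u i)) := by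
            rw [smul_smul, inv_mul_cancel₀ hs, one_smul]
        _ = (star (α k i))⁻¹ • u i := by rw [h1]
    rw [Matrix.dotProduct_mulVec,
      show star (u i) ᵥ* (A k)⁻¹ = star (((A k)⁻¹)ᴴ *ᵥ u i) from by
        rw [Matrix.star_mulVec, Matrix.conjTranspose_conjTranspose],
      Matrix.conjTranspose_nonsing_inv, hAHinv, star_smul, smul_dotProduct]
    simp [smul_eq_mul]
  -- entries of the transformed perturbation matrices
  have hent : ∀ k i j, (X * ((A k)⁻¹ * (B k - A k)) * Y) i j
      = ((β k j - α k i) / α k i) * Mm i j := by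
    intro k i j
    have h0 : (X * ((A k)⁻¹ * (B k - A k)) * Y) i j
        = star (u i) ⬝ᵥ (((A k)⁻¹ * (B k - A k)) *ᵥ v j) := by
      rw [Matrix.dotProduct_mulVec]
      simp only [Matrix.mul_apply, Matrix.vecMul, dotProduct, X, Y, Matrix.of_apply,
        Pi.star_apply]
    have hS : (A k)⁻¹ * (B k - A k) = (A k)⁻¹ * B k - 1 := by
      rw [Matrix.mul_sub, Matrix.nonsing_inv_mul _ (hAdet k)]
    rw [h0, hS, Matrix.sub_mulVec, dotProduct_sub, Matrix.one_mulVec,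
      ← Matrix.mulVec_mulVec, hβ k j, Matrix.mulVec_smul, dotProduct_smul,
      smul_eq_mul, hkey k i (v j), hMent i j]
    have hne := hα0 k i
    field_simp
  -- Frobenius norms in the eigenbasis
  have hfrob : ∀ k, (frobNorm ((A k)⁻¹ * (B k - A k))) ^ 2
      = ∑ i, ∑ j, (‖(α k i - β k j) / α k i‖ ^ 2) * W i j := by
    intro k
    have hnn : (0:ℝ) ≤ ∑ i, ∑ j, ‖((A k)⁻¹ * (B k - A k)) i j‖ ^ 2 := by positivity
    rw [frobNorm, Real.sq_sqrt hnn,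
      ← frob_unitary ((A k)⁻¹ * (B k - A k)) X Y hXX' hYY']
    refine Finset.sum_congr rfl fun i _ => Finset.sum_congr rfl fun j _ => ?_
    rw [hent k i j, norm_mul, mul_pow]
    rw [show ‖(β k j - α k i) / α k i‖ = ‖(α k i - β k j) / α k i‖ by
      rw [norm_div, norm_div, norm_sub_rev]]
    rfl
  -- the cost matrix
  set c : Fin n → Fin n → ℝ := fun i j => ∑ k, ‖(α k i - β k j) / α k i‖ ^ 2 with hcdef
  have htot : ∑ k, (frobNorm ((A k)⁻¹ * (B k - A k))) ^ 2 = ∑ i, ∑ j, c i j * W i j := by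
    rw [Finset.sum_congr rfl fun k _ => hfrob k]
    rw [Finset.sum_comm]
    refine Finset.sum_congr rfl fun i _ => ?_
    rw [Finset.sum_comm]
    refine Finset.sum_congr rfl fun j _ => ?_
    rw [hcdef, Finset.sum_mul]
  obtain ⟨π, hπ⟩ := exists_perm_sum_le c W hWds
  exact ⟨π, by rw [htot]; exact hπ⟩
end

section
/- Let A = (A^(1),...,A^(m)) be an m-tuple of pairwise commuting normal invertible n×n complex matrices with an orthonormal basis {u_1,...,u_n} of ℂ^n such that A^(k) u_j = α_j^(k) u_j, and let B = (B^(1),...,B^(m)) be an m-tuple of pairwise commuting (not necessarily normal) n×n complex matrices that are simultaneously unitarily upper-triangularizable: there is a unitary U such that each U* B^(k) U is upper triangular with diagonal entries β_1^(k),...,β_n^(k). Set E^(k) = B^(k) − A^(k). Then there exists a permutation σ of {1,...,n} such that ∑_{j=1}^n ∑_{k=1}^m |(α_j^(k) − β_{σ(j)}^(k)) / α_j^(k)|² ≤ n ∑_{k=1}^m ‖(A^(k))^{-1}‖² ‖E^(k)‖_F², where ‖(A^(k))^{-1}‖ is the operator (spectral) norm. -/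
open Matrix BigOperators

/-- The operator (spectral) norm of a complex `n × n` matrix, induced by the
Euclidean norm on `ℂⁿ`. -/
noncomputable def opNorm {n : ℕ} (M : Matrix (Fin n) (Fin n) ℂ) : ℝ :=
  ‖Matrix.toEuclideanCLM (𝕜 := ℂ) M‖

lemma mul_star_self (z : ℂ) : z * star z = ((‖z‖^2 : ℝ) : ℂ) := by
  rw [Complex.star_def, Complex.mul_conj']; push_cast; ring

lemma star_mul_self' (z : ℂ) : star z * z = ((‖z‖^2 : ℝ) : ℂ) := by
  rw [mul_comm]; exact mul_star_self z

lemma frobSq_eq_trace {n : ℕ} (M : Matrix (Fin n) (Fin n) ℂ) :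
    ∑ i, ∑ j, ‖M i j‖^2 = (Matrix.trace (Mᴴ * M)).re := by
  have h : Matrix.trace (Mᴴ * M) = ∑ j, ∑ i, ((‖M i j‖^2 : ℝ) : ℂ) := by
    simp only [Matrix.trace, Matrix.diag, Matrix.mul_apply, Matrix.conjTranspose_apply]
    exact Finset.sum_congr rfl fun j _ => Finset.sum_congr rfl fun i _ => star_mul_self' _
  rw [h, Complex.re_sum]
  simp only [Complex.re_sum, Complex.ofReal_re]
  exact Finset.sum_comm

lemma frobSq_lmul {n : ℕ} (Q M : Matrix (Fin n) (Fin n) ℂ) (hQ : Q * Qᴴ = 1) :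
    ∑ i, ∑ j, ‖(Qᴴ * M) i j‖^2 = ∑ i, ∑ j, ‖M i j‖^2 := by
  rw [frobSq_eq_trace, frobSq_eq_trace]
  congr 1
  rw [conjTranspose_mul, conjTranspose_conjTranspose, Matrix.mul_assoc,
    ← Matrix.mul_assoc Q, hQ, Matrix.one_mul]

lemma frobSq_conj {n : ℕ} (Q M : Matrix (Fin n) (Fin n) ℂ) (hQ : Qᴴ * Q = 1) :
    ∑ i, ∑ j, ‖(Qᴴ * M * Q) i j‖^2 = ∑ i, ∑ j, ‖M i j‖^2 := by
  rw [frobSq_eq_trace, frobSq_eq_trace]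
  congr 1
  have h2 : Q * Qᴴ = 1 := mul_eq_one_comm.mp hQ
  have e1 : (Qᴴ * M * Q)ᴴ * (Qᴴ * M * Q) = Qᴴ * ((Mᴴ * M) * Q) := by
    rw [conjTranspose_mul, conjTranspose_mul, conjTranspose_conjTranspose]
    simp only [Matrix.mul_assoc]
    rw [← Matrix.mul_assoc Q Qᴴ, h2, Matrix.one_mul]
  rw [e1, Matrix.trace_mul_comm, Matrix.mul_assoc, h2, Matrix.mul_one]

lemma exists_perm_of_doublyStochastic {n : ℕ} (S : Matrix (Fin n) (Fin n) ℝ)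
    (hS : S ∈ doublyStochastic ℝ (Fin n)) (c : Fin n → Fin n → ℝ) :
    ∃ σ : Equiv.Perm (Fin n), ∑ i, c i (σ i) ≤ ∑ i, ∑ j, S i j * c i j := by
  obtain ⟨w, hw0, hw1, hwS⟩ := exists_eq_sum_perm_of_mem_doublyStochastic hS
  have key : ∑ i, ∑ j, S i j * c i j = ∑ σ : Equiv.Perm (Fin n), w σ * ∑ i, c i (σ i) := by
    rw [← hwS]
    have hentry : ∀ i j, (∑ σ : Equiv.Perm (Fin n), w σ • σ.permMatrix ℝ) i j
        = ∑ σ : Equiv.Perm (Fin n), w σ * (if σ i = j then 1 else 0) := by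
      intro i j
      rw [Matrix.sum_apply]
      refine Finset.sum_congr rfl fun σ _ => ?_
      simp [Equiv.Perm.permMatrix, PEquiv.toMatrix_apply, Equiv.toPEquiv_apply]
    simp only [hentry, Finset.sum_mul]
    have h1 : ∀ i : Fin n, ∑ j, ∑ σ : Equiv.Perm (Fin n),
        w σ * (if σ i = j then 1 else 0) * c i j
        = ∑ σ : Equiv.Perm (Fin n), w σ * c i (σ i) := by
      intro i
      rw [Finset.sum_comm]
      refine Finset.sum_congr rfl fun σ _ => ?_
      have : ∀ j, w σ * (if σ i = j then 1 else 0) * c i j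
          = if σ i = j then w σ * c i j else 0 := by
        intro j; by_cases h : σ i = j <;> simp [h]
      simp only [this]
      simp
    simp only [h1]
    rw [Finset.sum_comm]
    refine Finset.sum_congr rfl fun σ _ => ?_
    rw [Finset.mul_sum]
  by_contra hcon
  push_neg at hcon
  obtain ⟨σ0, _, hσ0⟩ := Finset.exists_ne_zero_of_sum_ne_zero (by rw [hw1]; exact one_ne_zero)
  have hlt : ∑ i, ∑ j, S i j * c i j < ∑ σ : Equiv.Perm (Fin n), w σ * ∑ i, c i (σ i) := by
    calc ∑ i, ∑ j, S i j * c i j = ∑ σ : Equiv.Perm (Fin n), w σ * (∑ i, ∑ j, S i j * c i j) := by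
          rw [← Finset.sum_mul, hw1, one_mul]
      _ < ∑ σ : Equiv.Perm (Fin n), w σ * ∑ i, c i (σ i) := by
          refine Finset.sum_lt_sum (fun σ _ => mul_le_mul_of_nonneg_left (hcon σ).le (hw0 σ))
            ⟨σ0, Finset.mem_univ _, ?_⟩
          exact mul_lt_mul_of_pos_left (hcon σ0) ((hw0 σ0).lt_of_ne (Ne.symm hσ0))
  rw [← key] at hlt
  exact lt_irrefl _ hlt

lemma normal_tri_bound {n : ℕ} (P T : Matrix (Fin n) (Fin n) ℂ)
    (hnorm : P * Pᴴ = Pᴴ * P)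
    (htri : ∀ i j : Fin n, j < i → T i j = 0)
    (β : Fin n → ℂ) (hdiag : ∀ i, T i i = β i) :
    ∑ i, ∑ j, ‖(P - Matrix.diagonal β) i j‖^2 ≤ (n:ℝ) * ∑ i, ∑ j, ‖(T - P) i j‖^2 := by
  rcases Nat.eq_zero_or_pos n with rfl | hn
  · simp
  set f : Fin n → Fin n → ℝ := fun i j => ‖P i j‖^2 with hf
  have hf0 : ∀ i j, 0 ≤ f i j := fun i j => by positivity
  -- row sums equal column sums, from normality
  have rowcol : ∀ i, ∑ j, f i j = ∑ j, f j i := by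
    intro i
    have h := congrFun (congrFun hnorm i) i
    rw [Matrix.mul_apply, Matrix.mul_apply] at h
    simp only [Matrix.conjTranspose_apply] at h
    have h2 : ∑ j, ((‖P i j‖^2 : ℝ):ℂ) = ∑ j, ((‖P j i‖^2 : ℝ):ℂ) := by
      calc ∑ j, ((‖P i j‖^2 : ℝ):ℂ) = ∑ j, P i j * star (P i j) :=
            Finset.sum_congr rfl fun j _ => (mul_star_self _).symm
        _ = ∑ j, star (P j i) * P j i := h
        _ = ∑ j, ((‖P j i‖^2 : ℝ):ℂ) := Finset.sum_congr rfl fun j _ => star_mul_self' _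
    have h3 : ∑ j, ‖P i j‖^2 = ∑ j, ‖P j i‖^2 := by exact_mod_cast h2
    simpa [hf] using h3
  have weighted : ∑ i, ∑ j, (i.val : ℝ) * f i j = ∑ i, ∑ j, (j.val : ℝ) * f i j := by
    calc ∑ i, ∑ j, (i.val : ℝ) * f i j = ∑ i, (i.val : ℝ) * ∑ j, f i j := by
          simp [Finset.mul_sum]
      _ = ∑ i, (i.val : ℝ) * ∑ j, f j i :=
          Finset.sum_congr rfl fun i _ => by rw [rowcol i]
      _ = ∑ i, ∑ j, (i.val : ℝ) * f j i := by simp [Finset.mul_sum]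
      _ = ∑ i, ∑ j, (j.val : ℝ) * f i j := Finset.sum_comm
  set L := ∑ i, ∑ j, (if j < i then f i j else 0) with hL
  set Uu := ∑ i, ∑ j, (if i < j then f i j else 0) with hUu
  set Dd := ∑ i, ‖P i i - β i‖^2 with hDd
  have hL0 : 0 ≤ L := Finset.sum_nonneg fun i _ => Finset.sum_nonneg fun j _ => by
    split
    · exact hf0 i j
    · exact le_refl _
  have hDd0 : 0 ≤ Dd := Finset.sum_nonneg fun i _ => by positivity
  -- split of the LHS
  have lhs_split : ∑ i, ∑ j, ‖(P - Matrix.diagonal β) i j‖^2 = Uu + L + Dd := by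
    have hptw : ∀ i j : Fin n, ‖(P - Matrix.diagonal β) i j‖^2 =
        (if i < j then f i j else 0) + (if j < i then f i j else 0) +
        (if i = j then ‖P i i - β i‖^2 else 0) := by
      intro i j
      rcases lt_trichotomy i j with h|h|h
      · rw [Matrix.sub_apply, Matrix.diagonal_apply_ne _ (ne_of_lt h)]
        simp [h, not_lt_of_gt h, ne_of_lt h, hf]
      · subst h
        rw [Matrix.sub_apply, Matrix.diagonal_apply_eq]
        simp
      · rw [Matrix.sub_apply, Matrix.diagonal_apply_ne _ (ne_of_gt h)]
        simp [h, not_lt_of_gt h, ne_of_gt h, hf]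
    calc ∑ i, ∑ j, ‖(P - Matrix.diagonal β) i j‖^2
        = ∑ i, ∑ j, ((if i < j then f i j else 0) + (if j < i then f i j else 0) +
            (if i = j then ‖P i i - β i‖^2 else 0)) :=
          Finset.sum_congr rfl fun i _ => Finset.sum_congr rfl fun j _ => hptw i j
      _ = Uu + L + Dd := by
          simp only [Finset.sum_add_distrib]
          congr 1
          rw [hDd]
          refine Finset.sum_congr rfl fun i _ => ?_
          simp [Finset.sum_ite_eq]
  -- lower bound on the RHS sum
  have rhs_ge : L + Dd ≤ ∑ i, ∑ j, ‖(T - P) i j‖^2 := by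
    have hptw : ∀ i j : Fin n,
        (if j < i then f i j else 0) + (if i = j then ‖P i i - β i‖^2 else 0)
          ≤ ‖(T - P) i j‖^2 := by
      intro i j
      rcases lt_trichotomy i j with h|h|h
      · rw [if_neg (not_lt_of_gt h), if_neg (ne_of_lt h)]
        simp only [add_zero]
        positivity
      · subst h
        rw [Matrix.sub_apply, hdiag i]
        simp [lt_irrefl, ← norm_sub_rev (P i i)]
      · rw [Matrix.sub_apply, htri i j h]
        simp [h, not_lt_of_gt h, ne_of_gt h, f]
    calc L + Dd = ∑ i, ∑ j, ((if j < i then f i j else 0) +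
          (if i = j then ‖P i i - β i‖^2 else 0)) := by
          simp only [Finset.sum_add_distrib]
          congr 1
          rw [hDd]
          refine Finset.sum_congr rfl fun i _ => ?_
          simp [Finset.sum_ite_eq]
      _ ≤ ∑ i, ∑ j, ‖(T - P) i j‖^2 :=
          Finset.sum_le_sum fun i _ => Finset.sum_le_sum fun j _ => hptw i j
  -- upper triangular part controlled by lower triangular part
  have upper_bd : Uu ≤ ((n:ℝ) - 1) * L := by
    have step1 : Uu ≤ ∑ i, ∑ j, (if i < j then ((j.val:ℝ) - (i.val:ℝ)) * f i j else 0) := by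
      refine Finset.sum_le_sum fun i _ => Finset.sum_le_sum fun j _ => ?_
      by_cases h : i < j
      · simp only [if_pos h]
        have h1 : (1:ℝ) ≤ (j.val:ℝ) - (i.val:ℝ) := by
          have : i.val + 1 ≤ j.val := h
          have := Nat.cast_le (α := ℝ).mpr this
          push_cast at this
          linarith
        nlinarith [hf0 i j]
      · simp [h]
    have step2 : ∑ i, ∑ j, (if i < j then ((j.val:ℝ) - (i.val:ℝ)) * f i j else 0)
        = ∑ i, ∑ j, (if j < i then ((i.val:ℝ) - (j.val:ℝ)) * f i j else 0) := by
      have hdiff : ∀ i j : Fin n,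
          (if i < j then ((j.val:ℝ) - (i.val:ℝ)) * f i j else 0)
          - (if j < i then ((i.val:ℝ) - (j.val:ℝ)) * f i j else 0)
          = ((j.val:ℝ) - (i.val:ℝ)) * f i j := by
        intro i j
        rcases lt_trichotomy i j with h|h|h
        · simp [h, not_lt_of_gt h]
        · subst h; simp
        · simp only [not_lt_of_gt h, if_neg, if_pos h, if_false]
          ring
      have hzero : ∑ i, ∑ j, ((j.val:ℝ) - (i.val:ℝ)) * f i j = 0 := by
        have : ∀ i j : Fin n, ((j.val:ℝ) - (i.val:ℝ)) * f i j
            = (j.val:ℝ) * f i j - (i.val:ℝ) * f i j := fun i j => by ring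
        simp only [this, Finset.sum_sub_distrib]
        rw [← weighted]
        ring
      have expand : ∑ i, ∑ j, (if i < j then ((j.val:ℝ) - (i.val:ℝ)) * f i j else 0)
          - ∑ i, ∑ j, (if j < i then ((i.val:ℝ) - (j.val:ℝ)) * f i j else 0)
          = ∑ i, ∑ j, ((j.val:ℝ) - (i.val:ℝ)) * f i j := by
        rw [← Finset.sum_sub_distrib]
        refine Finset.sum_congr rfl fun i _ => ?_
        rw [← Finset.sum_sub_distrib]
        exact Finset.sum_congr rfl fun j _ => hdiff i j
      have := expand.trans hzero
      linarith
    have step3 : ∑ i, ∑ j, (if j < i then ((i.val:ℝ) - (j.val:ℝ)) * f i j else 0)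
        ≤ ((n:ℝ) - 1) * L := by
      rw [hL, Finset.mul_sum]
      refine Finset.sum_le_sum fun i _ => ?_
      rw [Finset.mul_sum]
      refine Finset.sum_le_sum fun j _ => ?_
      by_cases h : j < i
      · simp only [if_pos h]
        have hi : (i.val:ℝ) ≤ (n:ℝ) - 1 := by
          have : i.val + 1 ≤ n := i.isLt
          have := Nat.cast_le (α := ℝ).mpr this
          push_cast at this
          linarith
        have hj : (0:ℝ) ≤ (j.val:ℝ) := Nat.cast_nonneg _
        nlinarith [hf0 i j]
      · simp [h]
    linarith
  -- combine
  have hn1 : (1:ℝ) ≤ (n:ℝ) := by exact_mod_cast hn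
  have hmul := mul_le_mul_of_nonneg_left rhs_ge (show (0:ℝ) ≤ (n:ℝ) by positivity)
  rw [lhs_split]
  nlinarith [hDd0, hL0]

lemma sum_swap3 {ι κ γ : Type*} [Fintype ι] [Fintype κ] [Fintype γ] (g : ι → κ → γ → ℝ) :
    ∑ i, ∑ j, ∑ k, g i j k = ∑ k, ∑ i, ∑ j, g i j k := by
  calc ∑ i, ∑ j, ∑ k, g i j k = ∑ i, ∑ k, ∑ j, g i j k :=
        Finset.sum_congr rfl fun i _ => Finset.sum_comm
    _ = ∑ k, ∑ i, ∑ j, g i j k := Finset.sum_comm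

theorem relative_perturbation_normal_vs_arbitrary_tuple' {m n : ℕ}
    (A B : Fin m → Matrix (Fin n) (Fin n) ℂ)
    (hAnormal : ∀ k, A k * (A k)ᴴ = (A k)ᴴ * A k)
    (hAinv : ∀ k, IsUnit (A k))
    (u : Fin n → (Fin n → ℂ))
    (hu : ∀ i j, star (u i) ⬝ᵥ u j = if i = j then 1 else 0)
    (α : Fin m → Fin n → ℂ)
    (hα : ∀ k j, (A k).mulVec (u j) = α k j • u j)
    (U : Matrix (Fin n) (Fin n) ℂ)
    (hU : Uᴴ * U = 1)
    (β : Fin m → Fin n → ℂ)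
    (hTri : ∀ k, (Uᴴ * B k * U).BlockTriangular id)
    (hDiag : ∀ k j, (Uᴴ * B k * U) j j = β k j) :
    ∃ σ : Equiv.Perm (Fin n),
      ∑ j, ∑ k, ‖(α k j - β k (σ j)) / α k j‖ ^ 2 ≤
        n * ∑ k, (‖Matrix.toEuclideanCLM (𝕜 := ℂ) ((A k)⁻¹)‖) ^ 2 *
          (∑ i, ∑ j, ‖(B k - A k) i j‖ ^ 2) := by
  classical
  have hUU' : U * Uᴴ = 1 := mul_eq_one_comm.mp hU
  set V : Matrix (Fin n) (Fin n) ℂ := Matrix.of (fun i j => u j i) with hVdef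
  have hVV : Vᴴ * V = 1 := by
    ext i j
    have h := hu i j
    simp only [dotProduct, Pi.star_apply] at h
    simp only [Matrix.mul_apply, Matrix.conjTranspose_apply, Matrix.one_apply, hVdef,
      Matrix.of_apply]
    exact h
  have hVV' : V * Vᴴ = 1 := mul_eq_one_comm.mp hVV
  have hAV : ∀ k, A k * V = V * Matrix.diagonal (α k) := by
    intro k; ext i j
    have h := congrFun (hα k j) i
    simp only [Matrix.mulVec, dotProduct, Pi.smul_apply, smul_eq_mul] at h
    rw [Matrix.mul_apply, Matrix.mul_diagonal]
    simp only [hVdef, Matrix.of_apply]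
    rw [h, mul_comm]
  set W : Matrix (Fin n) (Fin n) ℂ := Vᴴ * U with hWdef
  have hWW : Wᴴ * W = 1 := by
    rw [hWdef, conjTranspose_mul, conjTranspose_conjTranspose, Matrix.mul_assoc,
      ← Matrix.mul_assoc V, hVV', Matrix.one_mul, hU]
  have hWW' : W * Wᴴ = 1 := mul_eq_one_comm.mp hWW
  have hAtil : ∀ k, Wᴴ * Matrix.diagonal (α k) * W = Uᴴ * A k * U := by
    intro k
    rw [hWdef, conjTranspose_mul, conjTranspose_conjTranspose]
    calc Uᴴ * V * Matrix.diagonal (α k) * (Vᴴ * U)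
        = Uᴴ * (V * Matrix.diagonal (α k)) * (Vᴴ * U) := by rw [Matrix.mul_assoc Uᴴ]
      _ = Uᴴ * (A k * V) * (Vᴴ * U) := by rw [hAV k]
      _ = Uᴴ * A k * ((V * Vᴴ) * U) := by simp only [Matrix.mul_assoc]
      _ = Uᴴ * A k * U := by rw [hVV', Matrix.one_mul]
  -- eigenvalues are nonzero and the inverse acts on eigenvectors
  have hune : ∀ i, u i ≠ 0 := by
    intro i hzero
    have h := hu i i
    rw [hzero] at h
    simp at h
  have hAiu : ∀ k i, (A k)⁻¹ *ᵥ u i = (α k i)⁻¹ • u i ∧ α k i ≠ 0 := by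
    intro k i
    have hdet : IsUnit (A k).det := (Matrix.isUnit_iff_isUnit_det _).mp (hAinv k)
    have hinv : (A k)⁻¹ * A k = 1 := Matrix.nonsing_inv_mul _ hdet
    have h1 : (A k)⁻¹ *ᵥ (A k *ᵥ u i) = u i := by
      rw [Matrix.mulVec_mulVec, hinv, Matrix.one_mulVec]
    rw [hα k i, Matrix.mulVec_smul] at h1
    have hα0 : α k i ≠ 0 := by
      intro h0
      rw [h0, zero_smul] at h1
      exact hune i h1.symm
    refine ⟨?_, hα0⟩
    have := congrArg (fun v => (α k i)⁻¹ • v) h1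
    simpa [smul_smul, inv_mul_cancel₀ hα0] using this
  have hNbound : ∀ k i, ‖(α k i)⁻¹‖ ≤ ‖Matrix.toEuclideanCLM (𝕜 := ℂ) ((A k)⁻¹)‖ := by
    intro k i
    set x : EuclideanSpace ℂ (Fin n) := (WithLp.equiv 2 _).symm (u i) with hx
    have hxnorm : ‖x‖ = 1 := by
      rw [EuclideanSpace.norm_eq]
      have h : ∑ l, ‖u i l‖^2 = 1 := by
        have h2 := hu i i
        simp only [dotProduct, Pi.star_apply, eq_self_iff_true, if_true] at h2
        have h3 : ∑ l, ((‖u i l‖^2 : ℝ) : ℂ) = 1 := by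
          rw [← h2]
          exact Finset.sum_congr rfl fun l _ => (star_mul_self' _).symm
        exact_mod_cast h3
      have : ∀ l, ‖x l‖^2 = ‖u i l‖^2 := fun l => rfl
      simp only [this, h, Real.sqrt_one]
    have happ : Matrix.toEuclideanCLM (𝕜 := ℂ) ((A k)⁻¹) x = (α k i)⁻¹ • x := by
      calc Matrix.toEuclideanCLM (𝕜 := ℂ) ((A k)⁻¹) x
          = (WithLp.equiv 2 _).symm ((A k)⁻¹ *ᵥ (u i)) :=
            Matrix.toEuclideanCLM_toLp _ _
        _ = (WithLp.equiv 2 _).symm ((α k i)⁻¹ • u i) := by rw [(hAiu k i).1]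
        _ = (α k i)⁻¹ • x := by rw [hx]; rfl
    have hle := (Matrix.toEuclideanCLM (𝕜 := ℂ) ((A k)⁻¹)).le_opNorm x
    rw [happ, norm_smul, hxnorm, mul_one] at hle
    linarith
  -- the doubly stochastic matrix from W
  have hSmem : (Matrix.of fun i j => ‖W i j‖^2) ∈ doublyStochastic ℝ (Fin n) := by
    rw [mem_doublyStochastic_iff_sum]
    refine ⟨fun i j => by simp only [Matrix.of_apply]; positivity, ?_, ?_⟩
    · intro i
      have h := congrFun (congrFun hWW' i) i
      rw [Matrix.mul_apply] at h
      simp only [Matrix.one_apply_eq] at h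
      have h3 : ∑ j, ((‖W i j‖^2 : ℝ) : ℂ) = 1 := by
        rw [← h]
        refine Finset.sum_congr rfl fun j _ => ?_
        rw [Matrix.conjTranspose_apply]
        exact (mul_star_self _).symm
      have h4 : ∑ j, ‖W i j‖^2 = 1 := by exact_mod_cast h3
      simpa using h4
    · intro j
      have h := congrFun (congrFun hWW j) j
      rw [Matrix.mul_apply] at h
      simp only [Matrix.one_apply_eq] at h
      have h3 : ∑ i, ((‖W i j‖^2 : ℝ) : ℂ) = 1 := by
        rw [← h]
        refine Finset.sum_congr rfl fun i _ => ?_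
        rw [Matrix.conjTranspose_apply]
        exact (star_mul_self' _).symm
      have h4 : ∑ i, ‖W i j‖^2 = 1 := by exact_mod_cast h3
      simpa using h4
  -- the key estimate for each k
  have key : ∀ k, ∑ i, ∑ j, ‖W i j‖^2 * ‖(α k i - β k j)/α k i‖^2
      ≤ (n:ℝ) * (‖Matrix.toEuclideanCLM (𝕜 := ℂ) ((A k)⁻¹)‖^2 *
        ∑ i, ∑ j, ‖(B k - A k) i j‖^2) := by
    intro k
    set N := ‖Matrix.toEuclideanCLM (𝕜 := ℂ) ((A k)⁻¹)‖ with hN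
    set D := Matrix.diagonal (α k) with hD
    set Δ := Matrix.diagonal (β k) with hΔ
    set T := Uᴴ * B k * U with hT
    set Atil := Uᴴ * A k * U with hAtil2
    have step1 : ∑ i, ∑ j, ‖W i j‖^2 * ‖(α k i - β k j)/α k i‖^2
        ≤ N^2 * ∑ i, ∑ j, ‖(D*W - W*Δ) i j‖^2 := by
      rw [Finset.mul_sum]
      refine Finset.sum_le_sum fun i _ => ?_
      rw [Finset.mul_sum]
      refine Finset.sum_le_sum fun j _ => ?_
      have hentry : (D*W - W*Δ) i j = α k i * W i j - W i j * β k j := by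
        rw [Matrix.sub_apply, Matrix.diagonal_mul, Matrix.mul_diagonal]
      have e' : (α k i)⁻¹ * (α k i * W i j - W i j * β k j)
          = (α k i - β k j)/α k i * W i j := by
        rw [div_eq_mul_inv]; ring
      calc ‖W i j‖^2 * ‖(α k i - β k j)/α k i‖^2
          = ‖(α k i - β k j)/α k i * W i j‖^2 := by rw [norm_mul]; ring
        _ = (‖(α k i)⁻¹‖ * ‖α k i * W i j - W i j * β k j‖)^2 := by
            rw [← norm_mul, e']
        _ ≤ (N * ‖α k i * W i j - W i j * β k j‖)^2 := by
            gcongr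
            exact hNbound k i
        _ = N^2 * ‖(D*W - W*Δ) i j‖^2 := by rw [hentry]; ring
    have step2 : ∑ i, ∑ j, ‖(D*W - W*Δ) i j‖^2 = ∑ i, ∑ j, ‖(Atil - Δ) i j‖^2 := by
      have e : Wᴴ * (D*W - W*Δ) = Atil - Δ := by
        calc Wᴴ * (D*W - W*Δ) = Wᴴ * (D*W) - Wᴴ * (W*Δ) := Matrix.mul_sub _ _ _
          _ = Wᴴ * D * W - (Wᴴ * W) * Δ := by
              rw [← Matrix.mul_assoc Wᴴ D W, ← Matrix.mul_assoc Wᴴ W Δ]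
          _ = Atil - Δ := by rw [hWW, Matrix.one_mul, hD, hAtil k, hAtil2]
      rw [← e, frobSq_lmul W _ hWW']
    have hAtilnormal : Atil * Atilᴴ = Atilᴴ * Atil := by
      have hAH : Atilᴴ = Uᴴ * (A k)ᴴ * U := by
        rw [hAtil2, conjTranspose_mul, conjTranspose_mul, conjTranspose_conjTranspose,
          Matrix.mul_assoc]
      rw [hAH, hAtil2]
      calc Uᴴ * A k * U * (Uᴴ * (A k)ᴴ * U)
          = Uᴴ * A k * (U * Uᴴ) * ((A k)ᴴ * U) := by simp only [Matrix.mul_assoc]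
        _ = Uᴴ * (A k * (A k)ᴴ) * U := by rw [hUU']; simp only [Matrix.mul_one, Matrix.mul_assoc]
        _ = Uᴴ * ((A k)ᴴ * A k) * U := by rw [hAnormal k]
        _ = Uᴴ * (A k)ᴴ * (U * Uᴴ) * (A k * U) := by rw [hUU']; simp only [Matrix.mul_one, Matrix.mul_assoc]
        _ = Uᴴ * (A k)ᴴ * U * (Uᴴ * A k * U) := by simp only [Matrix.mul_assoc]
    have step3 : ∑ i, ∑ j, ‖(Atil - Δ) i j‖^2 ≤ (n:ℝ) * ∑ i, ∑ j, ‖(T - Atil) i j‖^2 := by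
      refine normal_tri_bound Atil T hAtilnormal (fun i j h => hTri k ?_) (β k) (hDiag k)
      exact h
    have step5 : ∑ i, ∑ j, ‖(T - Atil) i j‖^2 = ∑ i, ∑ j, ‖(B k - A k) i j‖^2 := by
      have e : T - Atil = Uᴴ * (B k - A k) * U := by
        rw [hT, hAtil2, Matrix.mul_sub, Matrix.sub_mul]
      rw [e, frobSq_conj U _ hU]
    have hN2 : (0:ℝ) ≤ N^2 := sq_nonneg N
    calc ∑ i, ∑ j, ‖W i j‖^2 * ‖(α k i - β k j)/α k i‖^2
        ≤ N^2 * ∑ i, ∑ j, ‖(D*W - W*Δ) i j‖^2 := step1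
      _ = N^2 * ∑ i, ∑ j, ‖(Atil - Δ) i j‖^2 := by rw [step2]
      _ ≤ N^2 * ((n:ℝ) * ∑ i, ∑ j, ‖(T - Atil) i j‖^2) :=
          mul_le_mul_of_nonneg_left step3 hN2
      _ = (n:ℝ) * (N^2 * ∑ i, ∑ j, ‖(B k - A k) i j‖^2) := by rw [step5]; ring
  -- assemble via Birkhoff
  obtain ⟨σ, hσ⟩ := exists_perm_of_doublyStochastic _ hSmem
    (fun i j => ∑ k, ‖(α k i - β k j)/α k i‖^2)
  refine ⟨σ, ?_⟩
  calc ∑ j, ∑ k, ‖(α k j - β k (σ j)) / α k j‖ ^ 2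
      ≤ ∑ i, ∑ j, (Matrix.of fun i j => ‖W i j‖^2) i j
          * ∑ k, ‖(α k i - β k j)/α k i‖^2 := hσ
    _ = ∑ k, ∑ i, ∑ j, ‖W i j‖^2 * ‖(α k i - β k j)/α k i‖^2 := by
        simp only [Matrix.of_apply, Finset.mul_sum]
        exact sum_swap3 _
    _ ≤ ∑ k, (n:ℝ) * (‖Matrix.toEuclideanCLM (𝕜 := ℂ) ((A k)⁻¹)‖^2 *
          ∑ i, ∑ j, ‖(B k - A k) i j‖^2) := Finset.sum_le_sum fun k _ => key k
    _ = n * ∑ k, ‖Matrix.toEuclideanCLM (𝕜 := ℂ) ((A k)⁻¹)‖^2 *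
          ∑ i, ∑ j, ‖(B k - A k) i j‖^2 := by rw [Finset.mul_sum]

/-- **Relative perturbation bound when the perturbed tuple is not normal.**
If `A` is an `m`-tuple of pairwise commuting normal invertible matrices with an
orthonormal basis of joint eigenvectors and joint eigenvalues `α`, and `B` is an
`m`-tuple of pairwise commuting matrices simultaneously unitarily
upper-triangularized by `U` with diagonal entries `β`, then for some permutation `σ`,
`∑_j ∑_k |(α_j^(k) - β_{σ j}^(k)) / α_j^(k)|² ≤ n ∑_k ‖(A^(k))⁻¹‖² ‖B^(k) - A^(k)‖_F²`. -/
theorem relative_perturbation_normal_vs_arbitrary_tuple {m n : ℕ}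
    (A B : Fin m → Matrix (Fin n) (Fin n) ℂ)
    (hAcomm : ∀ k l, Commute (A k) (A l))
    (hBcomm : ∀ k l, Commute (B k) (B l))
    (hAnormal : ∀ k, A k * (A k)ᴴ = (A k)ᴴ * A k)
    (hAinv : ∀ k, IsUnit (A k))
    (u : Fin n → (Fin n → ℂ))
    (hu : ∀ i j, star (u i) ⬝ᵥ u j = if i = j then 1 else 0)
    (α : Fin m → Fin n → ℂ)
    (hα : ∀ k j, (A k).mulVec (u j) = α k j • u j)
    (U : Matrix (Fin n) (Fin n) ℂ)
    (hU : Uᴴ * U = 1)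
    (β : Fin m → Fin n → ℂ)
    (hTri : ∀ k, (Uᴴ * B k * U).BlockTriangular id)
    (hDiag : ∀ k j, (Uᴴ * B k * U) j j = β k j) :
    ∃ σ : Equiv.Perm (Fin n),
      ∑ j, ∑ k, ‖(α k j - β k (σ j)) / α k j‖ ^ 2 ≤
        n * ∑ k, (opNorm ((A k)⁻¹)) ^ 2 * (frobNorm (B k - A k)) ^ 2 := by
  obtain ⟨σ, hσ⟩ := relative_perturbation_normal_vs_arbitrary_tuple' A B hAnormal hAinv
    u hu α hα U hU β hTri hDiag
  refine ⟨σ, ?_⟩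
  have hfrob : ∀ k : Fin m, (frobNorm (B k - A k))^2 = ∑ i, ∑ j, ‖(B k - A k) i j‖^2 :=
    fun k => Real.sq_sqrt (by positivity)
  calc ∑ j, ∑ k, ‖(α k j - β k (σ j)) / α k j‖ ^ 2
      ≤ n * ∑ k, (‖Matrix.toEuclideanCLM (𝕜 := ℂ) ((A k)⁻¹)‖) ^ 2 *
        (∑ i, ∑ j, ‖(B k - A k) i j‖ ^ 2) := hσ
    _ = n * ∑ k, (opNorm ((A k)⁻¹)) ^ 2 * (frobNorm (B k - A k)) ^ 2 := by
        congr 1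
        refine Finset.sum_congr rfl fun k _ => ?_
        rw [hfrob k, opNorm]
end

section
/- The constant n in the perturbation bound ∑_{j=1}^n ∑_{k=1}^m |(α_j^(k) − β_{σ(j)}^(k))/α_j^(k)|² ≤ n ∑_{k=1}^m ‖(A^(k))^{-1}‖² ‖E^(k)‖_F² is attained (hence best possible): for k = 1,...,m let A^(k) = k·C and B^(k) = k·J, where C is the n×n cyclic shift matrix (entries C_{i,i+1} = 1 for 1 ≤ i ≤ n−1, C_{n,1} = 1, all others 0) and J is the n×n nilpotent Jordan shift (entries J_{i,i+1} = 1 for 1 ≤ i ≤ n−1, all others 0). The joint eigenvalues of A are α_j = (1·ω^j, 2·ω^j, ..., m·ω^j) with ω = e^{2πi/n}, j = 1,...,n, and the joint eigenvalues of B are all zero. For every permutation σ of {1,...,n}, ∑_{j=1}^n ∑_{k=1}^m |(α_j^(k) − β_{σ(j)}^(k))/α_j^(k)|² = n·m = n ∑_{k=1}^m ‖(A^(k))^{-1}‖² ‖B^(k) − A^(k)‖_F². -/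
open Matrix BigOperators

lemma mod_succ_inj' {n : ℕ} {a b : ℕ} (ha : a < n) (hb : b < n) :
    (a + 1) % n = (b + 1) % n ↔ a = b := by
  constructor
  · intro h
    rcases Nat.lt_or_ge (a + 1) n with h1 | h1
    · rw [Nat.mod_eq_of_lt h1] at h
      rcases Nat.lt_or_ge (b + 1) n with h2 | h2
      · rw [Nat.mod_eq_of_lt h2] at h; omega
      · have hb1 : b + 1 = n := by omega
        rw [hb1, Nat.mod_self] at h; omega
    · have ha1 : a + 1 = n := by omega
      rw [ha1, Nat.mod_self] at h
      rcases Nat.lt_or_ge (b + 1) n with h2 | h2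
      · rw [Nat.mod_eq_of_lt h2] at h; omega
      · omega
  · rintro rfl; rfl


set_option maxHeartbeats 1000000 in
set_option synthInstance.maxHeartbeats 1000000 in
/-- **Sharpness of the constant `n`.**
With `A^(k) = k·C` (cyclic shift) and `B^(k) = k·J` (nilpotent Jordan shift) for
`k = 1, …, m`, the joint eigenvalues of `A` are `α_j = (1·ω^j, …, m·ω^j)` for
`ω = e^{2πi/n}`, the joint eigenvalues of `B` are all zero, and for every
permutation `σ`,
`∑_j ∑_k |(α_j^(k) - 0)/α_j^(k)|² = n·m = n ∑_k ‖(A^(k))⁻¹‖² ‖B^(k) - A^(k)‖_F²`,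
so equality holds in the bound of the previous theorem. -/
theorem constant_n_is_best_possible {m n : ℕ} (hn : 0 < n)
    (C J : Matrix (Fin n) (Fin n) ℂ)
    (hC : ∀ i j : Fin n, C i j = if ((i : ℕ) + 1) % n = (j : ℕ) then 1 else 0)
    (hJ : ∀ i j : Fin n, J i j = if (i : ℕ) + 1 = (j : ℕ) then 1 else 0)
    (A B : Fin m → Matrix (Fin n) (Fin n) ℂ)
    (hA : ∀ k, A k = (((k : ℕ) + 1 : ℕ) : ℂ) • C)
    (hB : ∀ k, B k = (((k : ℕ) + 1 : ℕ) : ℂ) • J)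
    (ω : ℂ) (hω : ω = Complex.exp (2 * Real.pi * Complex.I / n))
    (α : Fin m → Fin n → ℂ)
    (hα : ∀ k j, α k j = (((k : ℕ) + 1 : ℕ) : ℂ) * ω ^ ((j : ℕ) + 1)) :
    -- each `α_j` is a joint eigenvalue of `A`
    (∀ j : Fin n, ∃ x : Fin n → ℂ, x ≠ 0 ∧ ∀ k, (A k).mulVec x = α k j • x) ∧
    -- `0` is a joint eigenvalue of `B`
    (∃ x : Fin n → ℂ, x ≠ 0 ∧ ∀ k, (B k).mulVec x = (0 : ℂ) • x) ∧
    -- and every joint eigenvalue of `B` is zero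
    (∀ μ : Fin m → ℂ,
      (∃ x : Fin n → ℂ, x ≠ 0 ∧ ∀ k, (B k).mulVec x = μ k • x) → μ = 0) ∧
    -- equality is attained for every permutation
    (∀ σ : Equiv.Perm (Fin n),
      ∑ j, ∑ k, ‖(α k j - 0) / α k j‖ ^ 2 = (n : ℝ) * m ∧
      (n : ℝ) * m =
        n * ∑ k, (opNorm ((A k)⁻¹)) ^ 2 * (frobNorm (B k - A k)) ^ 2) := by
  
  -- basic facts
  have hω0 : ω ≠ 0 := hω ▸ Complex.exp_ne_zero _
  have hω1 : ω ^ n = 1 := by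
    rw [hω, ← Complex.exp_nat_mul]
    have hne : (n : ℂ) ≠ 0 := Nat.cast_ne_zero.mpr hn.ne'
    rw [mul_div_cancel₀ _ hne, Complex.exp_two_pi_mul_I]
  have hmod : ∀ t : ℕ, ω ^ (t % n) = ω ^ t := by
    intro t
    conv_rhs => rw [← Nat.mod_add_div t n]
    rw [pow_add, pow_mul, hω1, one_pow, mul_one]
  have hCmul : ∀ (x : Fin n → ℂ) (i : Fin n),
      C.mulVec x i = x ⟨((i : ℕ) + 1) % n, Nat.mod_lt _ hn⟩ := by
    intro x i
    simp only [mulVec, dotProduct, hC]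
    rw [Finset.sum_eq_single (⟨((i : ℕ) + 1) % n, Nat.mod_lt _ hn⟩ : Fin n)]
    · simp
    · intro b _ hb
      rw [if_neg, zero_mul]
      intro h; exact hb (Fin.ext h.symm)
    · intro h; exact absurd (Finset.mem_univ _) h
  have hJmul : ∀ (x : Fin n → ℂ) (i : Fin n),
      J.mulVec x i = if h : (i : ℕ) + 1 < n then x ⟨(i : ℕ) + 1, h⟩ else 0 := by
    intro x i
    simp only [mulVec, dotProduct, hJ]
    by_cases h : (i : ℕ) + 1 < n
    · rw [dif_pos h, Finset.sum_eq_single (⟨(i : ℕ) + 1, h⟩ : Fin n)]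
      · simp
      · intro b _ hb
        rw [if_neg, zero_mul]
        intro hh; exact hb (Fin.ext hh.symm)
      · intro h; exact absurd (Finset.mem_univ _) h
    · rw [dif_neg h]
      apply Finset.sum_eq_zero
      intro b _
      rw [if_neg, zero_mul]
      intro hh; omega
  refine ⟨?_, ?_, ?_, ?_⟩
  · -- joint eigenvalues of A
    intro j
    refine ⟨fun i => ω ^ (((j : ℕ) + 1) * (i : ℕ)), ?_, ?_⟩
    · intro h0
      have := congrFun h0 ⟨0, hn⟩
      simp at this
    · intro k
      rw [hA, Matrix.smul_mulVec]
      funext i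
      simp only [Pi.smul_apply, smul_eq_mul, hCmul, hα]
      have key : ω ^ (((j : ℕ) + 1) * (((i : ℕ) + 1) % n))
          = ω ^ (((j : ℕ) + 1) * ((i : ℕ) + 1)) := by
        rw [mul_comm ((j : ℕ) + 1), pow_mul, hmod, ← pow_mul, mul_comm]
      rw [key, show ((j : ℕ) + 1) * ((i : ℕ) + 1)
          = ((j : ℕ) + 1) + ((j : ℕ) + 1) * (i : ℕ) by ring, pow_add]
      ring
  · -- 0 is a joint eigenvalue of B
    refine ⟨fun i => if (i : ℕ) = 0 then 1 else 0, ?_, ?_⟩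
    · intro h0
      have := congrFun h0 ⟨0, hn⟩
      simp at this
    · intro k
      rw [hB, Matrix.smul_mulVec]
      funext i
      simp only [Pi.smul_apply, smul_eq_mul, hJmul, zero_smul, Pi.zero_apply]
      by_cases h : (i : ℕ) + 1 < n
      · rw [dif_pos h]
        simp
      · rw [dif_neg h, mul_zero, zero_mul]
  · -- every joint eigenvalue of B is 0
    rintro μ ⟨x, hx0, hxe⟩
    by_contra hne
    have ⟨k, hk⟩ : ∃ k, μ k ≠ 0 := by
      by_contra h
      push_neg at h
      exact hne (funext h)
    have he : ∀ i : Fin n,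
        (((k : ℕ) + 1 : ℕ) : ℂ) * (J.mulVec x i) = μ k * x i := by
      intro i
      have := congrFun (hxe k) i
      rw [hB, Matrix.smul_mulVec] at this
      simpa using this
    have key : ∀ d : ℕ, ∀ i : Fin n, n ≤ (i : ℕ) + d + 1 → x i = 0 := by
      intro d
      induction d with
      | zero =>
        intro i hi
        have h := he i
        rw [hJmul, dif_neg (by omega), mul_zero] at h
        exact (mul_eq_zero.mp h.symm).resolve_left hk
      | succ d ih =>
        intro i hi
        have h := he i
        rw [hJmul] at h
        by_cases hlt : (i : ℕ) + 1 < n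
        · rw [dif_pos hlt, ih ⟨(i : ℕ) + 1, hlt⟩ (by simp; omega), mul_zero] at h
          exact (mul_eq_zero.mp h.symm).resolve_left hk
        · rw [dif_neg hlt, mul_zero] at h
          exact (mul_eq_zero.mp h.symm).resolve_left hk
    exact hx0 (funext fun i => key n i (by omega))
  · -- the equality
    intro σ
    have hcne : ∀ k : Fin m, (((k : ℕ) + 1 : ℕ) : ℂ) ≠ 0 := fun k =>
      Nat.cast_ne_zero.mpr (Nat.succ_ne_zero _)
    constructor
    · have : ∀ (j : Fin n) (k : Fin m), ‖(α k j - 0) / α k j‖ ^ 2 = 1 := by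
        intro j k
        have hane : α k j ≠ 0 := by
          rw [hα]
          exact mul_ne_zero (hcne k) (pow_ne_zero _ hω0)
        rw [sub_zero, div_self hane, norm_one, one_pow]
      simp only [this, Finset.sum_const, Finset.card_univ, Fintype.card_fin,
        nsmul_eq_mul, mul_one]
    · -- RHS computation
      have hterm : ∀ k : Fin m,
          (opNorm ((A k)⁻¹)) ^ 2 * (frobNorm (B k - A k)) ^ 2 = 1 := by
        intro k
        set c : ℂ := (((k : ℕ) + 1 : ℕ) : ℂ) with hc
        -- C * Cᴴ = 1
        have hCC : C * Cᴴ = 1 := by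
          ext i j
          simp only [mul_apply, conjTranspose_apply, hC]
          rw [Finset.sum_eq_single (⟨((i : ℕ) + 1) % n, Nat.mod_lt _ hn⟩ : Fin n)]
          · rw [if_pos rfl, one_mul]
            by_cases hij : i = j
            · subst hij
              simp
            · rw [if_neg, one_apply_ne hij, star_zero]
              intro h
              exact hij (Fin.ext ((mod_succ_inj' j.isLt i.isLt).mp h)).symm
          · intro b _ hb
            rw [if_neg, zero_mul]
            intro h; exact hb (Fin.ext h.symm)
          · intro h; exact absurd (Finset.mem_univ _) h
        have hinv : (A k)⁻¹ = c⁻¹ • Cᴴ := by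
          apply Matrix.inv_eq_right_inv
          rw [hA, Matrix.smul_mul, Matrix.mul_smul, hCC, smul_smul,
            mul_inv_cancel₀ (hcne k), one_smul]
        -- operator norm
        haveI : NeZero n := ⟨hn.ne'⟩
        have hop : opNorm ((A k)⁻¹) = ((((k : ℕ) + 1 : ℕ) : ℝ))⁻¹ := by
          have hT : Matrix.toEuclideanCLM (𝕜 := ℂ) Cᴴ ∈
              unitary (EuclideanSpace ℂ (Fin n) →L[ℂ] EuclideanSpace ℂ (Fin n)) := by
            rw [Unitary.mem_iff]
            constructor
            · rw [← map_star, ← _root_.map_mul, Matrix.star_eq_conjTranspose,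
                conjTranspose_conjTranspose, hCC, _root_.map_one]
            · rw [← map_star, ← _root_.map_mul, Matrix.star_eq_conjTranspose,
                conjTranspose_conjTranspose, mul_eq_one_comm.mp hCC, _root_.map_one]
          rw [hinv, opNorm, _root_.map_smul,
            norm_smul c⁻¹ (Matrix.toEuclideanCLM (𝕜 := ℂ) Cᴴ),
            CStarRing.norm_of_mem_unitary hT, mul_one, hc, norm_inv,
            Complex.norm_natCast]
        -- Frobenius norm
        have hD : ∀ i j : Fin n, (B k - A k) i j =
            if (i : ℕ) + 1 = n ∧ (j : ℕ) = 0 then -c else 0 := by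
          intro i j
          rw [hB, hA]
          simp only [Matrix.sub_apply, Matrix.smul_apply, smul_eq_mul, hC, hJ, ← hc]
          rcases Nat.lt_or_ge ((i : ℕ) + 1) n with h1 | h1
          · rw [Nat.mod_eq_of_lt h1, if_neg (by omega : ¬((i : ℕ) + 1 = n ∧ (j : ℕ) = 0))]
            ring
          · have h1' : (i : ℕ) + 1 = n := by omega
            have hj := j.isLt
            rw [show ((i : ℕ) + 1) % n = 0 by rw [h1', Nat.mod_self],
              if_neg (by omega : ¬((i : ℕ) + 1 = (j : ℕ))), mul_zero, zero_sub]
            by_cases h2 : (j : ℕ) = 0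
            · rw [if_pos h2.symm, mul_one, if_pos ⟨h1', h2⟩]
            · rw [if_neg (fun h => h2 h.symm), mul_zero, neg_zero,
                if_neg (by tauto)]
        have hfs : ∑ i, ∑ j, ‖(B k - A k) i j‖ ^ 2 = ((((k : ℕ) + 1 : ℕ) : ℝ)) ^ 2 := by
          rw [Finset.sum_eq_single (⟨n - 1, by omega⟩ : Fin n)]
          · rw [Finset.sum_eq_single (⟨0, hn⟩ : Fin n)]
            · rw [hD, if_pos (by exact ⟨by show n - 1 + 1 = n; omega, rfl⟩),
                norm_neg, hc, Complex.norm_natCast]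
            · intro b _ hb
              rw [hD, if_neg, norm_zero]
              · ring
              · rintro ⟨-, h0⟩
                exact hb (Fin.ext h0)
            · intro h; exact absurd (Finset.mem_univ _) h
          · intro b _ hb
            apply Finset.sum_eq_zero
            intro j _
            rw [hD, if_neg, norm_zero]
            · ring
            · rintro ⟨h1, -⟩
              exact hb (Fin.ext (by show (b : ℕ) = n - 1; omega))
          · intro h; exact absurd (Finset.mem_univ _) h
        have hfrob : (frobNorm (B k - A k)) ^ 2 = ((((k : ℕ) + 1 : ℕ) : ℝ)) ^ 2 := by
          rw [frobNorm, Real.sq_sqrt, hfs]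
          positivity
        rw [hop, hfrob]
        have : ((((k : ℕ) + 1 : ℕ) : ℝ)) ≠ 0 := by positivity
        field_simp
      simp only [hterm, Finset.sum_const, Finset.card_univ, Fintype.card_fin,
        nsmul_eq_mul, mul_one]
end
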